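/- Let k ≤ m be fixed integers with k < 0, and let f_n(t,u_{n+k},…,u_{n+m}), τ_n(t,u_n), φ_n(t,u_n) (n ∈ ℤ) be continuously differentiable real functions satisfying the determining equation for Lie point symmetries of the generalized Volterra-type equation identically. If ∂f_n/∂u_{n+k} is nowhere zero for every n ∈ ℤ, then τ_n(t,u_n) is independent of u_n, i.e. τ_n(t,u_n) = τ_n(t), and moreover τ_{n+k}(t) = τ_n(t) for all n ∈ ℤ and t ∈ ℝ (τ_n is |k|-periodic in n). -/

import Mathlib

/-- The index type `{k, k+1, …, m}` of the arguments `u_{n+k}, …, u_{n+m}` of `fₙ`. -/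
abbrev ShiftIdx (k m : ℤ) : Type := {l : ℤ // l ∈ Finset.Icc k m}

/-- The tuple `(u_{j+k}, …, u_{j+m})` read off from a configuration `U : ℤ → ℝ`. -/
def shiftArg (k m : ℤ) (U : ℤ → ℝ) (j : ℤ) : ShiftIdx k m → ℝ := fun i => U (j + i.1)

/-- The partial derivative `∂f_j/∂u_{j+l}` evaluated at `(t, u_{j+k}, …, u_{j+m})`,
where the `u`'s are read off from the configuration `U : ℤ → ℝ`. -/
noncomputable def pdF (k m : ℤ) (f : ℤ → ℝ → (ShiftIdx k m → ℝ) → ℝ) (t : ℝ) (U : ℤ → ℝ)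
    (j : ℤ) (l : ShiftIdx k m) : ℝ :=
  deriv (fun z => f j t (Function.update (shiftArg k m U j) l z)) (U (j + l.1))

/-- The determining equation for Lie point symmetries of the generalized Volterra-type
equation `u̇ₙ = fₙ(t, u_{n+k}, …, u_{n+m})`, with point-symmetry characteristic
`Qₙ = φₙ(t,uₙ) − τₙ(t,uₙ) u̇ₙ`, required to hold identically in `t` and in all the
jet variables (encoded by an arbitrary configuration `U : ℤ → ℝ`). -/
def GenVolterraDetEq (k m : ℤ) (f : ℤ → ℝ → (ShiftIdx k m → ℝ) → ℝ)
    (τ φ : ℤ → ℝ → ℝ → ℝ) : Prop :=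
  ∀ (n : ℤ) (t : ℝ) (U : ℤ → ℝ),
    (∑ l : ShiftIdx k m, pdF k m f t U n l *
        (φ (n + l.1) t (U (n + l.1)) -
          τ (n + l.1) t (U (n + l.1)) * f (n + l.1) t (shiftArg k m U (n + l.1)))) +
      (deriv (fun s => τ n s (U n)) t +
          deriv (fun z => τ n t z) (U n) * f n t (shiftArg k m U n)) *
        f n t (shiftArg k m U n) +
      τ n t (U n) *
        (deriv (fun s => f n s (shiftArg k m U n)) t +
          ∑ l : ShiftIdx k m, pdF k m f t U n l * f (n + l.1) t (shiftArg k m U (n + l.1))) -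
      deriv (fun s => φ n s (U n)) t -
      deriv (fun z => φ n t z) (U n) * f n t (shiftArg k m U n) = 0

/-!
Fix `n`, `t` and a configuration `U`, and vary only `u_{n+2k}`. Since `k < 0`, in the determining
equation at `n` this variable enters only through `f_{n+k}`, as its argument `u_{(n+k)+k}`, and
it does so in the two sums, with total coefficient `∂f_n/∂u_{n+k} · (τ_n(t,u_n) − τ_{n+k}(t,u_{n+k}))`.
As `∂f_{n+k}/∂u_{n+2k}` never vanishes, `f_{n+k}` takes at least two values along this variable,
so the coefficient vanishes; and `∂f_n/∂u_{n+k} ≠ 0` gives `τ_n(t,u_n) = τ_{n+k}(t,u_{n+k})` for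
arbitrary `u_n`, `u_{n+k}`.
-/

open Function

theorem injective_of_forall_deriv_ne_zero {F : ℝ → ℝ} (hF : ∀ x, deriv F x ≠ 0) :
    Injective F := by
  have hdiff : Differentiable ℝ F := fun x => differentiableAt_of_deriv_ne_zero (hF x)
  intro a b hab
  by_contra hne
  rcases lt_or_gt_of_ne hne with h | h
  · obtain ⟨c, -, hc⟩ := exists_deriv_eq_zero h hdiff.continuous.continuousOn hab
    exact hF c hc
  · obtain ⟨c, -, hc⟩ := exists_deriv_eq_zero h hdiff.continuous.continuousOn hab.symm
    exact hF c hc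

theorem Fintype.sum_sub_sum_eq_of_eq_of_ne {ι M : Type*} [Fintype ι] [AddCommGroup M]
    {a b : ι → M} (i : ι) (h : ∀ j ≠ i, a j = b j) :
    ∑ j, a j - ∑ j, b j = a i - b i := by
  rw [← Finset.sum_sub_distrib]
  exact Fintype.sum_eq_single i fun j hj => sub_eq_zero.2 (h j hj)

namespace ShiftIdx

variable {k m : ℤ}

def lowest (hkm : k ≤ m) : ShiftIdx k m := ⟨k, Finset.mem_Icc.mpr ⟨le_rfl, hkm⟩⟩

@[simp]
theorem val_lowest (hkm : k ≤ m) : (lowest hkm).1 = k := rfl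

theorem le_val (l : ShiftIdx k m) : k ≤ l.1 := (Finset.mem_Icc.mp l.2).1

theorem lt_val_of_ne_lowest {hkm : k ≤ m} {l : ShiftIdx k m} (hl : l ≠ lowest hkm) : k < l.1 :=
  lt_of_le_of_ne l.le_val fun h => hl (Subtype.ext h.symm)

end ShiftIdx

section Locality

variable {k m : ℤ} {U : ℤ → ℝ} {p j : ℤ} (z : ℝ)

theorem shiftArg_update_of_lt (h : p < j + k) :
    shiftArg k m (update U p z) j = shiftArg k m U j := by
  funext i
  exact update_of_ne (by have := i.le_val; omega) _ _

theorem shiftArg_update_add (i : ShiftIdx k m) :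
    shiftArg k m (update U (j + i.1) z) j = update (shiftArg k m U j) i z :=
  update_comp_eq_of_injective U (f := fun i : ShiftIdx k m => j + i.1)
    (fun _ _ h => Subtype.ext (add_left_cancel h)) i z

theorem pdF_update_of_lt (f : ℤ → ℝ → (ShiftIdx k m → ℝ) → ℝ) (t : ℝ) (l : ShiftIdx k m)
    (h : p < j + k) : pdF k m f t (update U p z) j l = pdF k m f t U j l := by
  unfold pdF
  rw [shiftArg_update_of_lt z h, update_of_ne (by have := l.le_val; omega)]

end Locality

theorem GenVolterraDetEq.pdF_mul_tau_sub_mul_f_sub_eq_zero {k m : ℤ} (hkm : k ≤ m) (hk : k < 0)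
    {f : ℤ → ℝ → (ShiftIdx k m → ℝ) → ℝ} {τ φ : ℤ → ℝ → ℝ → ℝ}
    (hdet : GenVolterraDetEq k m f τ φ) (n : ℤ) (t : ℝ) (U : ℤ → ℝ) (z : ℝ) :
    pdF k m f t U n (ShiftIdx.lowest hkm) * (τ n t (U n) - τ (n + k) t (U (n + k))) *
      (f (n + k) t (update (shiftArg k m U (n + k)) (ShiftIdx.lowest hkm) z) -
        f (n + k) t (shiftArg k m U (n + k))) = 0 := by
  set V := update U (n + k + k) z
  have hVn : V n = U n := update_of_ne (by omega) _ _
  have hV : ∀ l : ShiftIdx k m, V (n + l.1) = U (n + l.1) := fun l =>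
    update_of_ne (by have := l.le_val; omega) _ _
  have hpdF : ∀ l, pdF k m f t V n l = pdF k m f t U n l := fun l =>
    pdF_update_of_lt z f t l (by omega)
  have hshift_n : shiftArg k m V n = shiftArg k m U n := shiftArg_update_of_lt z (by omega)
  have hshift_lowest : shiftArg k m V (n + k) =
      update (shiftArg k m U (n + k)) (ShiftIdx.lowest hkm) z :=
    shiftArg_update_add z (ShiftIdx.lowest hkm)
  have hshift : ∀ l ≠ ShiftIdx.lowest hkm, shiftArg k m V (n + l.1) = shiftArg k m U (n + l.1) :=
    fun l hl => shiftArg_update_of_lt z (by have := ShiftIdx.lt_val_of_ne_lowest hl; omega)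
  have hS₁ := Fintype.sum_sub_sum_eq_of_eq_of_ne (ShiftIdx.lowest hkm)
    (a := fun l => pdF k m f t U n l * (φ (n + l.1) t (U (n + l.1)) -
      τ (n + l.1) t (U (n + l.1)) * f (n + l.1) t (shiftArg k m V (n + l.1))))
    (b := fun l => pdF k m f t U n l * (φ (n + l.1) t (U (n + l.1)) -
      τ (n + l.1) t (U (n + l.1)) * f (n + l.1) t (shiftArg k m U (n + l.1))))
    fun l hl => by simp only [hshift l hl]
  have hS₂ := Fintype.sum_sub_sum_eq_of_eq_of_ne (ShiftIdx.lowest hkm)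
    (a := fun l => pdF k m f t U n l * f (n + l.1) t (shiftArg k m V (n + l.1)))
    (b := fun l => pdF k m f t U n l * f (n + l.1) t (shiftArg k m U (n + l.1)))
    fun l hl => by simp only [hshift l hl]
  have hdetV := hdet n t V
  simp only [hVn, hV, hpdF, hshift_n] at hdetV
  simp only [ShiftIdx.val_lowest, hshift_lowest] at hS₁ hS₂
  linear_combination hdetV - hdet n t U - hS₁ - τ n t (U n) * hS₂

theorem GenVolterraDetEq.tau_add_eq {k m : ℤ} (hkm : k ≤ m) (hk : k < 0)
    {f : ℤ → ℝ → (ShiftIdx k m → ℝ) → ℝ} {τ φ : ℤ → ℝ → ℝ → ℝ}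
    (hdet : GenVolterraDetEq k m f τ φ)
    (hnd : ∀ n t v, deriv (fun z => f n t (update v (ShiftIdx.lowest hkm) z))
      (v (ShiftIdx.lowest hkm)) ≠ 0) (n : ℤ) (t a b : ℝ) :
    τ (n + k) t a = τ n t b := by
  set l₀ := ShiftIdx.lowest hkm
  set U : ℤ → ℝ := update (fun _ => b) (n + k) a
  set v := shiftArg k m U (n + k)
  have hinj : Injective fun z => f (n + k) t (update v l₀ z) :=
    injective_of_forall_deriv_ne_zero fun z => by
      simpa only [update_idem, update_self] using hnd (n + k) t (update v l₀ z)
  have hf_ne : f (n + k) t (update v l₀ (v l₀ + 1)) - f (n + k) t v ≠ 0 := by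
    rw [sub_ne_zero]
    conv_rhs => rw [← update_eq_self l₀ v]
    exact hinj.ne (by simp)
  have hpdF_ne : pdF k m f t U n l₀ ≠ 0 := hnd n t (shiftArg k m U n)
  have h := hdet.pdF_mul_tau_sub_mul_f_sub_eq_zero hkm hk n t U (v l₀ + 1)
  rw [show U n = b from update_of_ne (by omega) _ _,
    show U (n + k) = a from update_self _ _ _] at h
  have hcoeff := (mul_eq_zero.mp h).resolve_right hf_ne
  linear_combination -(mul_eq_zero.mp hcoeff).resolve_left hpdF_ne

theorem genVolterra_tau_k_periodic_general (k m : ℤ) (hkm : k ≤ m) (hk : k < 0)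
    (f : ℤ → ℝ → (ShiftIdx k m → ℝ) → ℝ) (τ φ : ℤ → ℝ → ℝ → ℝ)
    (hdet : GenVolterraDetEq k m f τ φ)
    (hnd : ∀ (n : ℤ) (t : ℝ) (v : ShiftIdx k m → ℝ),
      deriv (fun z => f n t (Function.update v ⟨k, Finset.mem_Icc.mpr ⟨le_rfl, hkm⟩⟩ z))
        (v ⟨k, Finset.mem_Icc.mpr ⟨le_rfl, hkm⟩⟩) ≠ 0) :
    (∀ (n : ℤ) (t u u' : ℝ), τ n t u = τ n t u') ∧
      (∀ (n : ℤ) (t u : ℝ), τ (n + k) t u = τ n t u) := by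
  have key := hdet.tau_add_eq hkm hk hnd
  refine ⟨fun n t u u' => ?_, fun n t u => key n t u u⟩
  have h := key (n - k) t
  rw [sub_add_cancel] at h
  rw [h u 0, h u' 0]

/-- Theorem 3.2, second case: for `u̇ₙ = fₙ(t,u_{n+k},…,u_{n+m})` with `k < 0` and
`∂fₙ/∂u_{n+k}` nowhere zero for all `n`, the symmetry coefficient `τₙ(t,uₙ)` is
independent of `uₙ` and is `|k|`-periodic in `n`. -/
theorem genVolterra_tau_k_periodic (k m : ℤ) (hkm : k ≤ m) (hk : k < 0)
    (f : ℤ → ℝ → (ShiftIdx k m → ℝ) → ℝ) (τ φ : ℤ → ℝ → ℝ → ℝ)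
    (hf : ∀ n, ContDiff ℝ 1 (fun p : ℝ × (ShiftIdx k m → ℝ) => f n p.1 p.2))
    (hτ : ∀ n, ContDiff ℝ 1 (fun p : ℝ × ℝ => τ n p.1 p.2))
    (hφ : ∀ n, ContDiff ℝ 1 (fun p : ℝ × ℝ => φ n p.1 p.2))
    (hdet : GenVolterraDetEq k m f τ φ)
    (hnd : ∀ (n : ℤ) (t : ℝ) (v : ShiftIdx k m → ℝ),
      deriv (fun z => f n t (Function.update v ⟨k, Finset.mem_Icc.mpr ⟨le_rfl, hkm⟩⟩ z))
        (v ⟨k, Finset.mem_Icc.mpr ⟨le_rfl, hkm⟩⟩) ≠ 0) :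
    (∀ (n : ℤ) (t u u' : ℝ), τ n t u = τ n t u') ∧
      (∀ (n : ℤ) (t u : ℝ), τ (n + k) t u = τ n t u) :=
  genVolterra_tau_k_periodic_general k m hkm hk f τ φ hdet hnd
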